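/- arXiv:2403.00120 — 4 statements merged into one kernel-verified Lean document; each statement's English description precedes it below -/
import Mathlib

section
/- Let q be a power of 3 and f ∈ F_q[X]. Then f is cubefree (not divisible by the cube of any nonconstant polynomial) if and only if the polynomials c_0(f), c_1(f), c_2(f) in the decomposition f = c_0(f)^3 + c_1(f)^3·X + c_2(f)^3·X^2 have greatest common divisor 1. -/
open Polynomial

/-- Over a finite field of characteristic 3, a polynomial `f` with decomposition
`f = c₀^3 + c₁^3·X + c₂^3·X²` is cubefree (no cube of a nonconstant polynomial divides it)
iff `c₀, c₁, c₂` have greatest common divisor 1 (every common divisor is a unit). -/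
theorem cubefree_iff_components_coprime {F : Type*} [Field F] [Fintype F] [CharP F 3]
    (f c0 c1 c2 : F[X]) (h : f = c0 ^ 3 + c1 ^ 3 * X + c2 ^ 3 * X ^ 2) :
    (∀ p : F[X], 0 < p.degree → ¬ p ^ 3 ∣ f) ↔
      (∀ d : F[X], d ∣ c0 → d ∣ c1 → d ∣ c2 → IsUnit d) := by
  have h3F : (3 : F) = 0 := CharP.cast_eq_zero F 3
  have hn : ((3 : ℕ) : F[X]) = 0 := CharP.cast_eq_zero F[X] 3
  have h3C : C (3 : F) = 0 := by rw [show (3 : F) = 0 from h3F, map_zero]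
  constructor
  · intro hcf d hd0 hd1 hd2
    by_contra hu
    rcases eq_or_ne d 0 with rfl | hdne
    · rw [zero_dvd_iff] at hd0 hd1 hd2
      subst hd0; subst hd1; subst hd2
      exact hcf X (by simp) (by simp [h])
    · have hdeg : 0 < d.degree := by
        rcases lt_or_ge 0 d.degree with h' | h'
        · exact h'
        · have : d.degree = 0 := le_antisymm h' (zero_le_degree_iff.mpr hdne)
          exact absurd (isUnit_iff_degree_eq_zero.mpr this) hu
      refine hcf d hdeg ?_
      subst h
      exact dvd_add (dvd_add (pow_dvd_pow_of_dvd hd0 3)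
        ((pow_dvd_pow_of_dvd hd1 3).mul_right X))
        ((pow_dvd_pow_of_dvd hd2 3).mul_right (X ^ 2))
  · intro hco p hp hdvd
    have hp0 : p ≠ 0 := fun h0 => by simp [h0] at hp
    have hpu : ¬ IsUnit p := fun hu => by
      rw [isUnit_iff_degree_eq_zero.mp hu] at hp; exact lt_irrefl _ hp
    obtain ⟨r, hr, hrp⟩ := WfDvdMonoid.exists_irreducible_factor hpu hp0
    have hrprime : Prime r := UniqueFactorizationMonoid.irreducible_iff_prime.mp hr
    have hrf : r ^ 3 ∣ f := dvd_trans (pow_dvd_pow_of_dvd hrp 3) hdvd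
    have key : ∀ g : F[X], derivative (r ^ 3 * g) = r ^ 3 * derivative g := by
      intro g
      rw [derivative_mul, derivative_pow, show ((3 : ℕ) : F) = 0 from by exact_mod_cast h3F,
        map_zero]
      ring
    obtain ⟨g, hg⟩ := hrf
    have hrf' : r ^ 3 ∣ f := ⟨g, hg⟩
    have hd1' : derivative f = r ^ 3 * derivative g := by rw [hg, key]
    have hd2' : derivative (derivative f) = r ^ 3 * derivative (derivative g) := by
      rw [hd1', key]
    have hdf : derivative f = c1 ^ 3 + 2 * c2 ^ 3 * X := by
      subst h
      simp only [derivative_add, derivative_mul, derivative_pow, derivative_X,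
        derivative_X_pow, hn]
      ring_nf
      rw [h3C, map_ofNat]
      ring
    have hddf : derivative (derivative f) = 2 * c2 ^ 3 := by
      rw [hdf]
      simp only [derivative_add, derivative_mul, derivative_pow, derivative_X,
        derivative_ofNat, hn]
      ring_nf
      rw [h3C]
      ring
    have h2F : (2 : F) ≠ 0 := by
      intro h2
      have : (1 : F) = 0 := by linear_combination h3F - h2
      exact one_ne_zero this
    have h2u : IsUnit (2 : F[X]) := by
      rw [← map_ofNat (C : F →+* F[X]) 2]
      exact isUnit_C.mpr (IsUnit.mk0 _ h2F)
    have hrc2 : r ∣ c2 := by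
      have hdd : r ^ 3 ∣ 2 * c2 ^ 3 := by
        rw [← hddf]; exact ⟨_, hd2'⟩
      have h' : r ^ 3 ∣ c2 ^ 3 := h2u.dvd_mul_left.mp hdd
      exact hrprime.dvd_of_dvd_pow (dvd_trans (dvd_pow_self r three_ne_zero) h')
    have hrc1 : r ∣ c1 := by
      have h1 : r ^ 3 ∣ c1 ^ 3 + 2 * c2 ^ 3 * X := by
        rw [← hdf]; exact ⟨_, hd1'⟩
      have h2 : r ^ 3 ∣ 2 * c2 ^ 3 * X :=
        ((pow_dvd_pow_of_dvd hrc2 3).mul_left 2).mul_right X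
      have h' : r ^ 3 ∣ c1 ^ 3 := (dvd_add_left h2).mp h1
      exact hrprime.dvd_of_dvd_pow (dvd_trans (dvd_pow_self r three_ne_zero) h')
    have hrc0 : r ∣ c0 := by
      have h1 : r ^ 3 ∣ c0 ^ 3 + (c1 ^ 3 * X + c2 ^ 3 * X ^ 2) := by
        rw [← add_assoc, ← h]; exact hrf'
      have h2 : r ^ 3 ∣ c1 ^ 3 * X := (pow_dvd_pow_of_dvd hrc1 3).mul_right X
      have h3' : r ^ 3 ∣ c2 ^ 3 * X ^ 2 := (pow_dvd_pow_of_dvd hrc2 3).mul_right _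
      have h' : r ^ 3 ∣ c0 ^ 3 := (dvd_add_left (dvd_add h2 h3')).mp h1
      exact hrprime.dvd_of_dvd_pow (dvd_trans (dvd_pow_self r three_ne_zero) h')
    exact hr.not_isUnit (hco r hrc0 hrc1 hrc2)
end

section
/- Let q be a prime power and F = F_q(X). For k ≥ 0, the number of ordered n-tuples (A_1,...,A_n) of polynomials in F_q[X] with gcd(A_1,...,A_n) = 1 and max{deg A_1,...,deg A_n} = k equals (q-1)·N_{F^n}(k), i.e., q^{nk-n+1}(q^n-1)(q^{n-1}-1) if k ≥ 1 and q^n - 1 if k = 0. -/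
/-!
Write `q = |F|` and `n` for the number of entries. Dividing a nonzero tuple by its monic gcd is a
bijection from nonzero tuples `A` to pairs `(d, B)` with `d` monic and `B` coprime, under which
`maxdeg A = deg d + maxdeg B`. There are `q ^ (n * k) * (q ^ n - 1)` tuples of max degree `k` and
`q ^ j` monic polynomials of degree `j`, so the number `C k` of coprime tuples of max degree `k`
satisfies `q ^ (n * k) * (q ^ n - 1) = ∑_{j ≤ k} q ^ j * C (k - j)`. Subtracting `q` times the
identity for `k` from the one for `k + 1` leaves `C (k + 1)` alone.
-/

open Polynomial

theorem WithBot.lt_natCast_succ_iff (x : WithBot ℕ) (k : ℕ) : x < (k + 1 : ℕ) ↔ x = k ∨ x < k := by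
  induction x with
  | bot => simp
  | coe m => simp only [Nat.cast_withBot, WithBot.coe_lt_coe, WithBot.coe_inj]; omega

theorem WithBot.natCast_add_eq_natCast_iff (x : WithBot ℕ) (j k : ℕ) :
    (j : WithBot ℕ) + x = k ↔ j ≤ k ∧ x = (k - j : ℕ) := by
  induction x with
  | bot => simp
  | coe m => simp only [Nat.cast_withBot, ← WithBot.coe_add, WithBot.coe_inj]; omega

theorem Finset.univ_gcd_eq_one_iff {α ι : Type*} [CommMonoidWithZero α] [NormalizedGCDMonoid α]
    [Fintype ι] (f : ι → α) :
    Finset.univ.gcd f = 1 ↔ ∀ d, (∀ i, d ∣ f i) → IsUnit d := by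
  refine ⟨fun h d hd => isUnit_of_dvd_one (h ▸ Finset.dvd_gcd fun i _ => hd i), fun h => ?_⟩
  rw [← Finset.normalize_gcd, normalize_eq_one]
  exact h _ fun i => Finset.gcd_dvd (Finset.mem_univ i)

theorem Nat.card_subtype_natCast_add_eq {α β : Type*} (f : α → ℕ) (g : β → WithBot ℕ) (k : ℕ)
    [Finite {p : α × β // (f p.1 : WithBot ℕ) + g p.2 = k}] :
    Nat.card {p : α × β // (f p.1 : WithBot ℕ) + g p.2 = k} =
      ∑ j : Fin (k + 1), Nat.card {a // f a = j} * Nat.card {b // g b = (k - j : ℕ)} := by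
  let e : {p : α × β // (f p.1 : WithBot ℕ) + g p.2 = k} ≃
      Σ j : Fin (k + 1), {a // f a = j} × {b // g b = (k - j : ℕ)} :=
    { toFun p :=
        have h := (WithBot.natCast_add_eq_natCast_iff _ _ _).1 p.2
        ⟨⟨f p.1.1, Nat.lt_succ_of_le h.1⟩, ⟨p.1.1, rfl⟩, ⟨p.1.2, h.2⟩⟩
      invFun x := ⟨(x.2.1, x.2.2), by
        rw [x.2.1.2, x.2.2.2, WithBot.natCast_add_eq_natCast_iff]
        exact ⟨Nat.le_of_lt_succ x.1.2, rfl⟩⟩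
      left_inv _ := rfl
      right_inv := by
        rintro ⟨⟨j, hj⟩, ⟨a, ha⟩, b⟩
        obtain rfl : f a = j := ha
        rfl }
  have : Finite (Σ j : Fin (k + 1), {a // f a = j} × {b // g b = (k - j : ℕ)}) := .of_equiv _ e
  have (j : Fin (k + 1)) : Finite ({a // f a = j} × {b // g b = (k - j : ℕ)}) :=
    .of_injective _ (@sigma_mk_injective _
      (fun j : Fin (k + 1) => {a // f a = j} × {b // g b = (k - j : ℕ)}) j)
  rw [Nat.card_congr e, Nat.card_sigma]
  simp only [Nat.card_prod]

theorem pow_mul_sub_one_eq_add (q n k : ℕ) (hq : 0 < q) :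
    q ^ (n * (k + 1)) * (q ^ n - 1) =
      q ^ (n * k + 1) * ((q ^ n - 1) * (q ^ (n - 1) - 1)) + q * (q ^ (n * k) * (q ^ n - 1)) := by
  rcases n with _ | m
  · simp
  · have h₁ : 1 ≤ q ^ m := Nat.one_le_pow _ _ hq
    have h₂ : 1 ≤ q ^ (m + 1) := Nat.one_le_pow _ _ hq
    simp only [Nat.add_sub_cancel]
    zify [h₁, h₂]
    ring

namespace Polynomial

section Semiring

variable {R ι : Type*} [Semiring R] [Fintype ι]

def maxDegree (A : ι → R[X]) : WithBot ℕ :=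
  Finset.univ.sup fun i => (A i).degree

theorem maxDegree_lt_iff {A : ι → R[X]} {m : ℕ} : maxDegree A < m ↔ ∀ i, (A i).degree < m := by
  simp [maxDegree]

theorem ne_zero_of_maxDegree_eq {A : ι → R[X]} {k : ℕ} (h : maxDegree A = k) : A ≠ 0 := by
  rintro rfl
  simp [maxDegree] at h

theorem maxDegree_smul [NoZeroDivisors R] (d : R[X]) (B : ι → R[X]) :
    maxDegree (d • B) = d.degree + maxDegree B := by
  rw [maxDegree, maxDegree, Finset.apply_sup_eq_sup_comp_of_linearOrder (d.degree + ·)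
    (fun _ _ h => add_le_add_right h _) (WithBot.add_bot _)]
  simp [Function.comp_def, degree_mul]

theorem card_degreeLT (m : ℕ) : Nat.card (degreeLT R m) = Nat.card R ^ m := by
  rw [Nat.card_congr (degreeLTEquiv R m).toEquiv, Nat.card_fun, Nat.card_fin]

def maxDegreeLTEquiv (m : ℕ) : {A : ι → R[X] // maxDegree A < m} ≃ (ι → degreeLT R m) :=
  (Equiv.subtypeEquivRight fun _ => by simp only [maxDegree_lt_iff, mem_degreeLT]).trans
    Equiv.subtypePiEquivPi

theorem card_maxDegree_lt (m : ℕ) :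
    Nat.card {A : ι → R[X] // maxDegree A < m} = Nat.card R ^ (Fintype.card ι * m) := by
  rw [Nat.card_congr (maxDegreeLTEquiv m), Nat.card_fun, card_degreeLT, ← pow_mul,
    Nat.card_eq_fintype_card (α := ι), mul_comm]

def maxDegreeLTSuccEquiv (k : ℕ) :
    {A : ι → R[X] // maxDegree A < (k + 1 : ℕ)} ≃
      {A : ι → R[X] // maxDegree A = k} ⊕ {A : ι → R[X] // maxDegree A < k} := by
  classical
  exact (Equiv.subtypeEquivRight fun A => WithBot.lt_natCast_succ_iff _ k).trans
    (subtypeOrEquiv _ _ <| Pi.disjoint_iff.2 fun _ => Prop.disjoint_iff.2 fun h => h.2.ne h.1)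

instance [Finite R] (m : ℕ) : Finite {A : ι → R[X] // maxDegree A < m} :=
  have : Finite (degreeLT R m) := .of_equiv _ (degreeLTEquiv R m).toEquiv.symm
  .of_equiv _ (maxDegreeLTEquiv m).symm

instance [Finite R] (k : ℕ) : Finite {A : ι → R[X] // maxDegree A = k} :=
  have := Finite.of_equiv _ (maxDegreeLTSuccEquiv (R := R) (ι := ι) k)
  Finite.sum_left {A : ι → R[X] // maxDegree A < k}

theorem card_maxDegree_eq [Finite R] (k : ℕ) :
    Nat.card {A : ι → R[X] // maxDegree A = k} =
      Nat.card R ^ (Fintype.card ι * k) * (Nat.card R ^ Fintype.card ι - 1) := by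
  have h := Nat.card_congr (maxDegreeLTSuccEquiv (R := R) (ι := ι) k)
  rw [Nat.card_sum, card_maxDegree_lt, card_maxDegree_lt] at h
  rw [Nat.mul_sub, mul_one, ← pow_add, ← mul_add_one, h, Nat.add_sub_cancel]

theorem card_monic_natDegree_eq [Nontrivial R] (j : ℕ) :
    Nat.card {d : {d : R[X] // d.Monic} // d.1.natDegree = j} = Nat.card R ^ j :=
  (Nat.card_congr ((Equiv.subtypeSubtypeEquivSubtypeInter _ _).trans (monicEquivDegreeLT j))).trans
    (card_degreeLT j)

end Semiring

section Field

variable {F ι : Type*} [Field F] [DecidableEq F] [Fintype ι]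

theorem monic_univ_gcd {A : ι → F[X]} (hA : A ≠ 0) : (Finset.univ.gcd A).Monic := by
  obtain ⟨i, hi⟩ := Function.ne_iff.1 hA
  rw [← Finset.normalize_gcd]
  exact monic_normalize (Finset.gcd_ne_zero_iff.2 ⟨i, Finset.mem_univ i, hi⟩)

theorem univ_gcd_smul_of_monic {d : F[X]} (hd : d.Monic) (B : ι → F[X]) :
    Finset.univ.gcd (d • B) = d * Finset.univ.gcd B := by
  rw [← hd.normalize_eq_self, ← Finset.gcd_mul_left, hd.normalize_eq_self]
  rfl

theorem univ_gcd_div_univ_gcd {A : ι → F[X]} (hA : A ≠ 0) :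
    Finset.univ.gcd (fun i => A i / Finset.univ.gcd A) = 1 := by
  obtain ⟨i, hi⟩ := Function.ne_iff.1 hA
  exact Finset.gcd_div_eq_one (Finset.mem_univ i) hi

noncomputable def gcdSMulEquiv :
    {A : ι → F[X] // A ≠ 0} ≃
      {d : F[X] // d.Monic} × {B : ι → F[X] // ∀ d, (∀ i, d ∣ B i) → IsUnit d} where
  toFun A :=
    (⟨Finset.univ.gcd A.1, monic_univ_gcd A.2⟩,
      ⟨fun i => A.1 i / Finset.univ.gcd A.1,
        (Finset.univ_gcd_eq_one_iff _).1 (univ_gcd_div_univ_gcd A.2)⟩)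
  invFun p := ⟨p.1.1 • p.2.1, smul_ne_zero p.1.2.ne_zero fun hB =>
    not_isUnit_zero (p.2.2 0 fun i => by simp [hB])⟩
  left_inv A := Subtype.ext <| _root_.funext fun i =>
    EuclideanDomain.mul_div_cancel' (monic_univ_gcd A.2).ne_zero
      (Finset.gcd_dvd (Finset.mem_univ i))
  right_inv := by
    rintro ⟨⟨d, hd⟩, ⟨B, hB⟩⟩
    have hgcd : Finset.univ.gcd (d • B) = d := by
      rw [univ_gcd_smul_of_monic hd, (Finset.univ_gcd_eq_one_iff B).2 hB, mul_one]
    ext : 2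
    · exact hgcd
    · refine _root_.funext fun i => ?_
      simp only [hgcd, Pi.smul_apply, smul_eq_mul]
      exact mul_div_cancel_left₀ (B i) hd.ne_zero

theorem maxDegree_gcdSMulEquiv_symm
    (p : {d : F[X] // d.Monic} × {B : ι → F[X] // ∀ d, (∀ i, d ∣ B i) → IsUnit d}) :
    maxDegree (gcdSMulEquiv.symm p).1 = p.1.1.natDegree + maxDegree p.2.1 := by
  rw [← degree_eq_natDegree p.1.2.ne_zero]
  exact maxDegree_smul _ _

theorem card_maxDegree_eq_sum [Finite F] (k : ℕ) :
    Nat.card {A : ι → F[X] // maxDegree A = k} =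
      ∑ j : Fin (k + 1), Nat.card F ^ (j : ℕ) * Nat.card
        {B : ι → F[X] // (∀ d, (∀ i, d ∣ B i) → IsUnit d) ∧ maxDegree B = (k - j : ℕ)} := by
  let e : {p : {d : F[X] // d.Monic} × {B : ι → F[X] // ∀ d, (∀ i, d ∣ B i) → IsUnit d} //
        (p.1.1.natDegree : WithBot ℕ) + maxDegree p.2.1 = k} ≃
      {A : ι → F[X] // maxDegree A = k} :=
    (gcdSMulEquiv.symm.subtypeEquiv fun p => by rw [maxDegree_gcdSMulEquiv_symm]).trans
      (Equiv.subtypeSubtypeEquivSubtype ne_zero_of_maxDegree_eq)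
  have := Finite.of_equiv _ e.symm
  rw [← Nat.card_congr e]
  refine (Nat.card_subtype_natCast_add_eq (fun d : {d : F[X] // d.Monic} => d.1.natDegree)
    (fun B : {B : ι → F[X] // _} => maxDegree B.1) k).trans (Finset.sum_congr rfl fun j _ => ?_)
  rw [card_monic_natDegree_eq]
  exact congrArg _ <| Nat.card_congr <|
    Equiv.subtypeSubtypeEquivSubtypeInter _ (maxDegree · = (k - j : ℕ))

theorem card_coprime_maxDegree_zero [Finite F] :
    Nat.card {B : ι → F[X] // (∀ d, (∀ i, d ∣ B i) → IsUnit d) ∧ maxDegree B = (0 : ℕ)} =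
      Nat.card F ^ Fintype.card ι - 1 := by
  have h := card_maxDegree_eq_sum (F := F) (ι := ι) 0
  rw [card_maxDegree_eq, Fin.sum_univ_one] at h
  simpa using h.symm

theorem card_coprime_maxDegree_succ_add [Finite F] (k : ℕ) :
    Nat.card {B : ι → F[X] // (∀ d, (∀ i, d ∣ B i) → IsUnit d) ∧ maxDegree B = (k + 1 : ℕ)} +
        Nat.card F * Nat.card {A : ι → F[X] // maxDegree A = k} =
      Nat.card {A : ι → F[X] // maxDegree A = (k + 1 : ℕ)} := by
  rw [card_maxDegree_eq_sum (k + 1), Fin.sum_univ_succ, card_maxDegree_eq_sum k, Finset.mul_sum]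
  simp [pow_succ', mul_assoc]

theorem card_coprime_maxDegree [Finite F] (k : ℕ) :
    Nat.card {B : ι → F[X] // (∀ d, (∀ i, d ∣ B i) → IsUnit d) ∧ maxDegree B = k} =
      if k = 0 then Nat.card F ^ Fintype.card ι - 1
      else Nat.card F ^ (Fintype.card ι * k - Fintype.card ι + 1) *
        ((Nat.card F ^ Fintype.card ι - 1) * (Nat.card F ^ (Fintype.card ι - 1) - 1)) := by
  cases k with
  | zero => exact card_coprime_maxDegree_zero
  | succ k =>
    have h := card_coprime_maxDegree_succ_add (F := F) (ι := ι) k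
    rw [card_maxDegree_eq, card_maxDegree_eq,
      pow_mul_sub_one_eq_add (Nat.card F) (Fintype.card ι) k Finite.card_pos] at h
    rw [if_neg k.succ_ne_zero, Nat.mul_add_one, Nat.add_sub_cancel]
    omega

end Field

end Polynomial

theorem card_coprime_tuples_of_max_degree_general {F : Type*} [Field F] [Fintype F] (q n k : ℕ)
    (hq : Fintype.card F = q) :
    Nat.card {A : Fin n → Polynomial F //
      (∀ d : Polynomial F, (∀ i, d ∣ A i) → IsUnit d) ∧
      (Finset.univ.sup fun i => (A i).degree) = (k : WithBot ℕ)} =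
      if k = 0 then q ^ n - 1
      else q ^ (n * k - n + 1) * ((q ^ n - 1) * (q ^ (n - 1) - 1)) := by
  classical
  have h := Polynomial.card_coprime_maxDegree (F := F) (ι := Fin n) k
  rwa [Nat.card_eq_fintype_card (α := F), hq, Fintype.card_fin] at h

/-- The number of ordered `n`-tuples `(A₁, …, Aₙ)` of polynomials over `𝔽_q` with
`gcd(A₁, …, Aₙ) = 1` and `max{deg A₁, …, deg Aₙ} = k` equals
`q^{nk-n+1}(q^n-1)(q^{n-1}-1)` for `k ≥ 1` and `q^n - 1` for `k = 0`. -/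
theorem card_coprime_tuples_of_max_degree {F : Type*} [Field F] [Fintype F] (q n k : ℕ)
    (hq : Fintype.card F = q) (hn : 2 ≤ n) :
    Nat.card {A : Fin n → Polynomial F //
      (∀ d : Polynomial F, (∀ i, d ∣ A i) → IsUnit d) ∧
      (Finset.univ.sup fun i => (A i).degree) = (k : WithBot ℕ)} =
      if k = 0 then q ^ n - 1
      else q ^ (n * k - n + 1) * ((q ^ n - 1) * (q ^ (n - 1) - 1)) :=
  card_coprime_tuples_of_max_degree_general q n k hq
end

section
/- Let q be a prime power and m ≥ 1 an integer. Among ordered triples (A_1,A_2,A_3) of coprime polynomials with max degree m, let S_R(m) for a nonempty subset R ⊆ {1,2,3} be those triples with deg A_i = m exactly for i ∈ R. Then for distinct i, j: |S_i(m)| = |S(m)|/(1+q+q^2), |S_{i,j}(m)| = (q-1)|S(m)|/(1+q+q^2), and |S_{1,2,3}(m)| = (q-1)^2|S(m)|/(1+q+q^2). -/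
open Polynomial

/-- `S(m)`: ordered triples of coprime polynomials over `𝔽_q` with maximal degree `m`. -/
def Smax (F : Type*) [Field F] (m : ℕ) : Set (Fin 3 → Polynomial F) :=
  {A | (∀ d : Polynomial F, (∀ i, d ∣ A i) → IsUnit d) ∧
    (Finset.univ.sup fun i => (A i).degree) = (m : WithBot ℕ)}

/-- `S_R(m)`: those triples in `S(m)` where `deg Aᵢ = m` exactly for `i ∈ R`. -/
def SmaxR (F : Type*) [Field F] (m : ℕ) (R : Set (Fin 3)) : Set (Fin 3 → Polynomial F) :=
  {A ∈ Smax F m | ∀ i, (A i).degree = (m : WithBot ℕ) ↔ i ∈ R}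

section Aux

variable {F : Type*} [Field F] {m : ℕ}

lemma deg_le_of_mem {A : Fin 3 → Polynomial F} (hA : A ∈ Smax F m) (k : Fin 3) :
    (A k).degree ≤ (m : WithBot ℕ) :=
  hA.2 ▸ Finset.le_sup (f := fun i => (A i).degree) (Finset.mem_univ k)

lemma smax_finite [Fintype F] : (Smax F m).Finite := by
  rw [← Set.finite_coe_iff]
  apply Finite.of_injective (fun A => fun p : Fin 3 × Fin (m+1) => ((A.1 p.1).coeff p.2 : F))
  rintro ⟨A, hA⟩ ⟨B, hB⟩ h
  ext k n
  by_cases hn : n ≤ m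
  · simpa using congrFun h (k, ⟨n, Nat.lt_succ_of_le hn⟩)
  · rw [Polynomial.coeff_eq_zero_of_degree_lt, Polynomial.coeff_eq_zero_of_degree_lt]
    · exact lt_of_le_of_lt (deg_le_of_mem hB k) (by exact_mod_cast Nat.lt_of_not_le hn)
    · exact lt_of_le_of_lt (deg_le_of_mem hA k) (by exact_mod_cast Nat.lt_of_not_le hn)

lemma smaxR_finite [Fintype F] (R : Set (Fin 3)) : (SmaxR F m R).Finite :=
  smax_finite.subset fun _ hA => hA.1

lemma smax_comp (σ : Equiv.Perm (Fin 3)) {B : Fin 3 → Polynomial F} (hB : B ∈ Smax F m) :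
    (fun b => B (σ b)) ∈ Smax F m := by
  constructor
  · intro d hd
    exact hB.1 d fun k => by simpa using hd (σ.symm k)
  · rw [← hB.2]
    apply le_antisymm
    · exact Finset.sup_le fun k _ => Finset.le_sup (f := fun i => (B i).degree)
        (Finset.mem_univ (σ k))
    · exact Finset.sup_le fun k _ => by
        simpa using Finset.le_sup (f := fun b => (B (σ b)).degree) (Finset.mem_univ (σ.symm k))

lemma card_SmaxR_preimage (σ : Equiv.Perm (Fin 3)) (R : Set (Fin 3)) :
    Nat.card (SmaxR F m (σ ⁻¹' R)) = Nat.card (SmaxR F m R) := by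
  apply Nat.card_congr
  refine (Equiv.piCongrLeft' (fun _ => Polynomial F) σ).subtypeEquiv fun A => ?_
  constructor
  · rintro ⟨h1, h2⟩
    exact ⟨smax_comp σ.symm h1, fun k => by simpa using h2 (σ.symm k)⟩
  · rintro ⟨h1, h2⟩
    refine ⟨?_, fun k => by simpa using h2 (σ k)⟩
    have := smax_comp σ h1
    simpa using this

lemma shear_mem (i j : Fin 3) (hij : i ≠ j) {R : Set (Fin 3)} (hiR : i ∈ R) (hjR : j ∉ R)
    {c : F} (hc : c ≠ 0) {A : Fin 3 → Polynomial F} (hA : A ∈ SmaxR F m R) :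
    Function.update A j (A j + C c * A i) ∈ SmaxR F m (insert j R) := by
  obtain ⟨hA, hAR⟩ := hA
  have hdi : (A i).degree = (m : WithBot ℕ) := (hAR i).mpr hiR
  have hdj : (A j).degree < (m : WithBot ℕ) :=
    lt_of_le_of_ne (deg_le_of_mem hA j) (fun h => hjR ((hAR j).mp h))
  have hdB : (A j + C c * A i).degree = (m : WithBot ℕ) := by
    rw [degree_add_eq_right_of_degree_lt, degree_C_mul hc, hdi]
    rw [degree_C_mul hc, hdi]; exact hdj
  refine ⟨⟨?_, ?_⟩, ?_⟩
  · intro d hd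
    apply hA.1 d
    intro k
    by_cases hk : k = j
    · have h1 : d ∣ A j + C c * A i := by simpa [Function.update_self] using hd j
      have h2 : d ∣ A i := by simpa [Function.update_of_ne hij] using hd i
      have h3 : d ∣ (A j + C c * A i) - C c * A i := h1.sub (h2.mul_left _)
      rw [hk]
      simpa using h3
    · simpa [Function.update_of_ne hk] using hd k
  · apply le_antisymm
    · apply Finset.sup_le
      intro k _
      by_cases hk : k = j
      · subst hk; rw [Function.update_self]; exact le_of_eq hdB
      · rw [Function.update_of_ne hk]; exact deg_le_of_mem hA k
    · have h := Finset.le_sup (f := fun k => (Function.update A j (A j + C c * A i) k).degree)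
        (Finset.mem_univ j)
      simp only [Function.update_self, hdB] at h
      exact h
  · intro k
    by_cases hk : k = j
    · subst hk
      simp [Function.update_self, hdB]
    · rw [Function.update_of_ne hk, hAR k]
      simp [Set.mem_insert_iff, hk]

lemma card_SmaxR_insert [Fintype F] {q : ℕ} (hq : Fintype.card F = q)
    (i j : Fin 3) (hij : i ≠ j) {R : Set (Fin 3)} (hiR : i ∈ R) (hjR : j ∉ R) :
    Nat.card (SmaxR F m (insert j R)) = (q - 1) * Nat.card (SmaxR F m R) := by
  have hbij : Function.Bijective (fun p : {c : F // c ≠ 0} × (SmaxR F m R) =>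
      (⟨Function.update p.2.1 j (p.2.1 j + C p.1.1 * p.2.1 i),
        shear_mem i j hij hiR hjR p.1.2 p.2.2⟩ : SmaxR F m (insert j R))) := by
    constructor
    · rintro ⟨⟨c, hc⟩, ⟨A, hA⟩⟩ ⟨⟨c', hc'⟩, ⟨A', hA'⟩⟩ h
      simp only [Subtype.mk.injEq] at h
      have hAk : ∀ k, k ≠ j → A k = A' k := by
        intro k hk
        have := congrFun h k
        simpa [Function.update_of_ne hk] using this
      have hAi : A i = A' i := hAk i hij
      have hj : A j + C c * A i = A' j + C c' * A i := by
        have := congrFun h j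
        simpa [Function.update_self, hAi] using this
      have hdi : (A i).degree = (m : WithBot ℕ) := (hA.2 i).mpr hiR
      have hdj : (A j).degree < (m : WithBot ℕ) :=
        lt_of_le_of_ne (deg_le_of_mem hA.1 j) (fun h => hjR ((hA.2 j).mp h))
      have hdj' : (A' j).degree < (m : WithBot ℕ) :=
        lt_of_le_of_ne (deg_le_of_mem hA'.1 j) (fun h => hjR ((hA'.2 j).mp h))
      have hcc : c = c' := by
        by_contra hcc
        have key : A j - A' j = C (c' - c) * A i := by
          rw [map_sub]; ring_nf
          linear_combination hj
        have hlt : (A j - A' j).degree < (m : WithBot ℕ) :=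
          lt_of_le_of_lt (degree_sub_le _ _) (max_lt hdj hdj')
        rw [key, degree_C_mul (sub_ne_zero.mpr (Ne.symm hcc)), hdi] at hlt
        exact lt_irrefl _ hlt
      subst hcc
      have hAj : A j = A' j := add_right_cancel hj
      have : A = A' := funext fun k => by
        by_cases hk : k = j
        · rw [hk]; exact hAj
        · exact hAk k hk
      simp [this]
    · rintro ⟨B, hB⟩
      have hdj : (B j).degree = (m : WithBot ℕ) := (hB.2 j).mpr (Set.mem_insert j R)
      have hdi : (B i).degree = (m : WithBot ℕ) := (hB.2 i).mpr (Set.mem_insert_of_mem j hiR)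
      have hBj0 : B j ≠ 0 := fun h => by simp [h, degree_zero] at hdj
      have hBi0 : B i ≠ 0 := fun h => by simp [h, degree_zero] at hdi
      set c : F := (B j).leadingCoeff * ((B i).leadingCoeff)⁻¹ with hc_def
      have hc : c ≠ 0 := mul_ne_zero (leadingCoeff_ne_zero.mpr hBj0)
        (inv_ne_zero (leadingCoeff_ne_zero.mpr hBi0))
      set A : Fin 3 → Polynomial F := Function.update B j (B j - C c * B i) with hA_def
      have hAi : A i = B i := Function.update_of_ne hij _ _
      have hdAj : (A j).degree < (m : WithBot ℕ) := by
        have h1 : (C c * B i).degree = (B j).degree := by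
          rw [degree_C_mul hc, hdi, hdj]
        have h2 : (C c * B i).leadingCoeff = (B j).leadingCoeff := by
          rw [leadingCoeff_mul, leadingCoeff_C, hc_def, mul_assoc,
            inv_mul_cancel₀ (leadingCoeff_ne_zero.mpr hBi0), mul_one]
        have := degree_sub_lt h1.symm hBj0 h2.symm
        rw [hA_def, Function.update_self, ← hdj]
        exact this
      have hAmem : A ∈ SmaxR F m R := by
        refine ⟨⟨?_, ?_⟩, ?_⟩
        · intro d hd
          apply hB.1.1 d
          intro k
          by_cases hk : k = j
          · have h1 : d ∣ B j - C c * B i := by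
              simpa [hA_def, Function.update_self] using hd j
            have h2 : d ∣ B i := by simpa [hAi] using hd i
            have h3 : d ∣ (B j - C c * B i) + C c * B i := h1.add (h2.mul_left _)
            rw [hk]
            simpa using h3
          · simpa [hA_def, Function.update_of_ne hk] using hd k
        · apply le_antisymm
          · apply Finset.sup_le
            intro k _
            by_cases hk : k = j
            · subst hk; exact le_of_lt hdAj
            · rw [hA_def, Function.update_of_ne hk]; exact deg_le_of_mem hB.1 k
          · have h := Finset.le_sup (f := fun k => (A k).degree) (Finset.mem_univ i)
            simp only [hAi, hdi] at h
            exact h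
        · intro k
          by_cases hk : k = j
          · subst hk
            exact iff_of_false (fun h => absurd h (ne_of_lt hdAj)) hjR
          · rw [hA_def, Function.update_of_ne hk, hB.2 k]
            simp [Set.mem_insert_iff, hk]
      refine ⟨⟨⟨c, hc⟩, ⟨A, hAmem⟩⟩, Subtype.ext (funext fun k => ?_)⟩
      show Function.update A j (A j + C c * A i) k = B k
      by_cases hk : k = j
      · rw [hk, Function.update_self, hAi, hA_def, Function.update_self]
        ring
      · rw [Function.update_of_ne hk, hA_def, Function.update_of_ne hk]
  have hcard : Nat.card {c : F // c ≠ 0} = q - 1 := by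
    rw [← Nat.card_congr (unitsEquivNeZero (G₀ := F)), Nat.card_units,
      Nat.card_eq_fintype_card, hq]
  rw [← Nat.card_congr (Equiv.ofBijective _ hbij), Nat.card_prod, hcard]

lemma disjW (x : Fin 3) {R R' : Set (Fin 3)} (hx : x ∈ R) (hx' : x ∉ R') :
    Disjoint (SmaxR F m R) (SmaxR F m R') :=
  Set.disjoint_left.mpr fun _ hA hA' => hx' ((hA'.2 x).mp ((hA.2 x).mpr hx))

lemma Smax_eq_union :
    Smax F m = SmaxR F m {0} ∪ (SmaxR F m {1} ∪ (SmaxR F m {2} ∪ (SmaxR F m {0, 1} ∪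
      (SmaxR F m {0, 2} ∪ (SmaxR F m {1, 2} ∪ SmaxR F m Set.univ))))) := by
  ext A
  constructor
  · intro hA
    have hex : ∃ k, (A k).degree = (m : WithBot ℕ) := by
      obtain ⟨i0, -, hs⟩ := Finset.exists_mem_eq_sup Finset.univ Finset.univ_nonempty
        (fun i => (A i).degree)
      exact ⟨i0, by rw [← hs, hA.2]⟩
    by_cases h0 : (A 0).degree = (m : WithBot ℕ) <;>
      by_cases h1 : (A 1).degree = (m : WithBot ℕ) <;>
      by_cases h2 : (A 2).degree = (m : WithBot ℕ)
    · exact Or.inr (Or.inr (Or.inr (Or.inr (Or.inr (Or.inr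
        ⟨hA, fun k => by fin_cases k <;> simp [h0, h1, h2]⟩)))))
    · exact Or.inr (Or.inr (Or.inr (Or.inl
        ⟨hA, fun k => by fin_cases k <;> simp [h0, h1, h2]⟩)))
    · exact Or.inr (Or.inr (Or.inr (Or.inr (Or.inl
        ⟨hA, fun k => by fin_cases k <;> simp [h0, h1, h2]⟩))))
    · exact Or.inl ⟨hA, fun k => by fin_cases k <;> simp [h0, h1, h2]⟩
    · exact Or.inr (Or.inr (Or.inr (Or.inr (Or.inr (Or.inl
        ⟨hA, fun k => by fin_cases k <;> simp [h0, h1, h2]⟩)))))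
    · exact Or.inr (Or.inl ⟨hA, fun k => by fin_cases k <;> simp [h0, h1, h2]⟩)
    · exact Or.inr (Or.inr (Or.inl ⟨hA, fun k => by fin_cases k <;> simp [h0, h1, h2]⟩))
    · obtain ⟨k, hk⟩ := hex
      fin_cases k
      · exact absurd hk h0
      · exact absurd hk h1
      · exact absurd hk h2
  · intro h
    rcases h with h | h | h | h | h | h | h <;> exact h.1

lemma card_Smax_eq_sum [Fintype F] :
    Nat.card (Smax F m) =
      Nat.card (SmaxR F m {0}) + (Nat.card (SmaxR F m {1}) + (Nat.card (SmaxR F m {2}) +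
        (Nat.card (SmaxR F m {0, 1}) + (Nat.card (SmaxR F m {0, 2}) +
          (Nat.card (SmaxR F m {1, 2}) + Nat.card (SmaxR F m Set.univ)))))) := by
  have fin : ∀ R : Set (Fin 3), (SmaxR F m R).Finite := smaxR_finite
  have d1 : Disjoint (SmaxR F m {0}) (SmaxR F m {1} ∪ (SmaxR F m {2} ∪ (SmaxR F m {0, 1} ∪
      (SmaxR F m {0, 2} ∪ (SmaxR F m {1, 2} ∪ SmaxR F m Set.univ))))) :=
    (disjW 0 (by simp) (by simp)).union_right <|
    (disjW 0 (by simp) (by simp)).union_right <|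
    ((disjW 1 (by simp) (by simp)).symm).union_right <|
    ((disjW 2 (by simp) (by simp)).symm).union_right <|
    (disjW 0 (by simp) (by simp)).union_right <|
    ((disjW 1 (by simp) (by simp)).symm)
  have d2 : Disjoint (SmaxR F m {1}) (SmaxR F m {2} ∪ (SmaxR F m {0, 1} ∪
      (SmaxR F m {0, 2} ∪ (SmaxR F m {1, 2} ∪ SmaxR F m Set.univ)))) :=
    (disjW 1 (by simp) (by simp)).union_right <|
    ((disjW 0 (by simp) (by simp)).symm).union_right <|
    (disjW 1 (by simp) (by simp)).union_right <|
    ((disjW 2 (by simp) (by simp)).symm).union_right <|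
    ((disjW 0 (by simp) (by simp)).symm)
  have d3 : Disjoint (SmaxR F m {2}) (SmaxR F m {0, 1} ∪
      (SmaxR F m {0, 2} ∪ (SmaxR F m {1, 2} ∪ SmaxR F m Set.univ))) :=
    (disjW 2 (by simp) (by simp)).union_right <|
    ((disjW 0 (by simp) (by simp)).symm).union_right <|
    ((disjW 1 (by simp) (by simp)).symm).union_right <|
    ((disjW 0 (by simp) (by simp)).symm)
  have d4 : Disjoint (SmaxR F m {0, 1})
      (SmaxR F m {0, 2} ∪ (SmaxR F m {1, 2} ∪ SmaxR F m Set.univ)) :=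
    (disjW 1 (by simp) (by simp)).union_right <|
    (disjW 0 (by simp) (by simp)).union_right <|
    ((disjW 2 (by simp) (by simp)).symm)
  have d5 : Disjoint (SmaxR F m {0, 2}) (SmaxR F m {1, 2} ∪ SmaxR F m Set.univ) :=
    (disjW 0 (by simp) (by simp)).union_right <|
    ((disjW 1 (by simp) (by simp)).symm)
  have d6 : Disjoint (SmaxR F m {1, 2}) (SmaxR F m Set.univ) :=
    ((disjW 0 (by simp) (by simp)).symm)
  rw [Nat.card_coe_set_eq, Smax_eq_union,
    Set.ncard_union_eq d1 (fin _) (((fin _).union ((fin _).union ((fin _).union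
      ((fin _).union ((fin _).union (fin _))))))),
    Set.ncard_union_eq d2 (fin _) (((fin _).union ((fin _).union
      ((fin _).union ((fin _).union (fin _)))))),
    Set.ncard_union_eq d3 (fin _) (((fin _).union ((fin _).union ((fin _).union (fin _))))),
    Set.ncard_union_eq d4 (fin _) (((fin _).union ((fin _).union (fin _)))),
    Set.ncard_union_eq d5 (fin _) ((fin _).union (fin _)),
    Set.ncard_union_eq d6 (fin _) (fin _)]
  simp only [← Nat.card_coe_set_eq]

end Aux

/-- For `m ≥ 1` and distinct `i, j`:
`|S_i(m)| = |S(m)|/(1+q+q²)`, `|S_{i,j}(m)| = (q-1)|S(m)|/(1+q+q²)`, and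
`|S_{1,2,3}(m)| = (q-1)²|S(m)|/(1+q+q²)`. -/
theorem card_SmaxR {F : Type*} [Field F] [Fintype F] (q m : ℕ)
    (hq : Fintype.card F = q) (hm : 1 ≤ m) (i j : Fin 3) (hij : i ≠ j) :
    (1 + q + q ^ 2) * Nat.card (SmaxR F m {i}) = Nat.card (Smax F m) ∧
    (1 + q + q ^ 2) * Nat.card (SmaxR F m {i, j}) = (q - 1) * Nat.card (Smax F m) ∧
    (1 + q + q ^ 2) * Nat.card (SmaxR F m Set.univ) = (q - 1) ^ 2 * Nat.card (Smax F m) := by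
  have hq1 : 1 ≤ q := hq ▸ Fintype.card_pos
  obtain ⟨t, rfl⟩ : ∃ t, q = t + 1 := ⟨q - 1, by omega⟩
  have hsub : t + 1 - 1 = t := by omega
  -- all singletons have equal cardinality
  have hsing : ∀ x : Fin 3, Nat.card (SmaxR F m ({x} : Set (Fin 3))) =
      Nat.card (SmaxR F m ({0} : Set (Fin 3))) := by
    intro x
    have h := card_SmaxR_preimage (F := F) (m := m) (Equiv.swap 0 x) {x}
    have hpre : (Equiv.swap 0 x) ⁻¹' ({x} : Set (Fin 3)) = {0} := by
      ext y
      simp only [Set.mem_preimage, Set.mem_singleton_iff]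
      constructor
      · intro hy
        have := (Equiv.swap 0 x).injective (hy.trans (Equiv.swap_apply_left 0 x).symm)
        exact this
      · rintro rfl
        exact Equiv.swap_apply_left 0 x
    rw [hpre] at h
    exact h.symm
  set a := Nat.card (SmaxR F m ({0} : Set (Fin 3))) with ha
  -- pairs
  have hpair : ∀ x y : Fin 3, x ≠ y →
      Nat.card (SmaxR F m ({x, y} : Set (Fin 3))) = t * a := by
    intro x y hxy
    have : ({x, y} : Set (Fin 3)) = insert x {y} := rfl
    rw [this, card_SmaxR_insert hq y x hxy.symm (Set.mem_singleton y)
      (fun h => hxy (Set.mem_singleton_iff.mp h)), hsub, hsing y]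
  -- univ
  have hall : ∀ z : Fin 3, z ∈ ({2, 0, 1} : Set (Fin 3)) := by
    intro z
    fin_cases z <;> simp
  have huniv_eq : (Set.univ : Set (Fin 3)) = insert 2 ({0, 1} : Set (Fin 3)) := by
    ext z
    simpa using hall z
  have huniv : Nat.card (SmaxR F m (Set.univ : Set (Fin 3))) = t * (t * a) := by
    rw [huniv_eq, card_SmaxR_insert hq 0 2 (by decide) (Set.mem_insert 0 {1})
      (fun h => by rcases Set.mem_insert_iff.mp h with h | h <;> exact absurd h (by decide)),
      hsub, hpair 0 1 (by decide)]
  have hsum := card_Smax_eq_sum (F := F) (m := m)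
  rw [hsing 1, hsing 2, hpair 0 1 (by decide), hpair 0 2 (by decide), hpair 1 2 (by decide),
    huniv, ← ha] at hsum
  refine ⟨?_, ?_, ?_⟩
  · rw [hsing i, hsum]; ring
  · rw [hpair i j hij, hsum, hsub]; ring
  · rw [huniv, hsum, hsub]; ring
end

section
/- Suppose p = 3 and let μ'_{ε,g}(a) denote the proportion of monic squarefree polynomials f of degree 2g + ε over F_q (q a power of 3) such that the smooth hyperelliptic curve Y^2 = f(X) has a-number a. If a > ⌈g/3⌉, then μ'_{1,g}(a) = μ'_{2,g}(a) = 0. Equivalently, every hyperelliptic curve of genus g in characteristic 3 has a-number at most ⌈g/3⌉. -/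
open Polynomial Matrix

/-!
Write `Q = Q₀³ + Q₁³X + Q₂³X²` and `f = c₀³ + c₁³X + c₂³X²`. The triples of two members of `M`
are both orthogonal to `(c₂, c₁, c₀)`, so their cross product is a multiple of `(c₂, c₁, c₀)`,
and a polynomial multiple because the `cᵢ` are coprime (`f` is squarefree). Degree bounds on
the triples make the cross product too small to be a nonzero multiple of the `cᵢ` that carries
the leading term of `f`, so it vanishes: the triples are proportional. Then all nonzero members
of `M` have degrees in one residue class mod 3, which has only `⌈g/3⌉` elements below `g`.
-/

theorem exists_dotProduct_eq_one_of_isUnit {R ι : Type*} [CommRing R] [IsPrincipalIdealRing R]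
    [Fintype ι] (c : ι → R) (h : ∀ d, (∀ i, d ∣ c i) → IsUnit d) : ∃ u, u ⬝ᵥ c = 1 := by
  obtain ⟨d, hd⟩ := (IsPrincipalIdealRing.principal (Ideal.span (Set.range c))).principal
  have hunit : IsUnit d := h d fun i => by
    rw [← Ideal.mem_span_singleton, ← Ideal.submodule_span_eq, ← hd]
    exact Ideal.subset_span ⟨i, rfl⟩
  have h1 : (1 : R) ∈ Ideal.span (Set.range c) := by
    rw [hd, Ideal.submodule_span_eq, Ideal.span_singleton_eq_top.2 hunit]
    trivial
  exact Ideal.mem_span_range_iff_exists_fun.1 h1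

section CrossProduct

variable {R : Type*} [CommRing R]

theorem cross_eq_smul_of_dotProduct_eq_zero {u c v w : Fin 3 → R}
    (hu : u ⬝ᵥ c = 1) (hv : v ⬝ᵥ c = 0) (hw : w ⬝ᵥ c = 0) :
    v ⨯₃ w = (u ⬝ᵥ v ⨯₃ w) • c := by
  have hpar : c ⨯₃ (v ⨯₃ w) = 0 := by
    rw [cross_cross_eq_smul_sub_smul', dotProduct_comm c w, hw, hv, zero_smul, zero_smul,
      sub_zero]
  have h := cross_cross_eq_smul_sub_smul' u c (v ⨯₃ w)
  rw [hpar, map_zero, dotProduct_comm c u, hu, one_smul] at h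
  exact (sub_eq_zero.1 h.symm).symm

theorem mul_eq_mul_of_cross_eq_zero {v w : Fin 3 → R} (h : v ⨯₃ w = 0) (i j : Fin 3) :
    v i * w j = v j * w i := by
  have h0 := congrFun h 0
  have h1 := congrFun h 1
  have h2 := congrFun h 2
  simp only [cross_apply, Pi.zero_apply, cons_val_zero, cons_val_one, cons_val] at h0 h1 h2
  fin_cases i <;> fin_cases j <;> grind

end CrossProduct

theorem finrank_le_of_natDegree_mod_eq {K : Type*} [Field K] {M : Submodule K K[X]} {g m : ℕ}
    (hm : 0 < m) (hg : ∀ Q ∈ M, Q.degree < g)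
    (hmod : ∀ P ∈ M, ∀ Q ∈ M, P ≠ 0 → Q ≠ 0 → P.natDegree % m = Q.natDegree % m) :
    Module.finrank K M ≤ (g + m - 1) / m := by
  rcases eq_or_ne M ⊥ with rfl | hM
  · simp
  obtain ⟨P, hP, hP0⟩ := (Submodule.ne_bot_iff M).1 hM
  let φ : M →ₗ[K] (Fin ((g + m - 1) / m) → K) :=
    LinearMap.pi fun j => lcoeff K (m * j + P.natDegree % m) ∘ₗ M.subtype
  have hφ : Function.Injective φ := by
    rw [← LinearMap.ker_eq_bot, LinearMap.ker_eq_bot']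
    rintro ⟨Q, hQ⟩ hφQ
    by_contra hQ0
    replace hQ0 : Q ≠ 0 := fun h => hQ0 (by simp [h])
    have hdeg : Q.natDegree < g := (natDegree_lt_iff_degree_lt hQ0).2 (hg Q hQ)
    have hj : Q.natDegree / m < (g + m - 1) / m := by
      rw [Nat.div_lt_iff_lt_mul hm]
      have := Nat.lt_div_mul_add (a := g + m - 1) hm
      omega
    have hcoeff := congrFun hφQ ⟨_, hj⟩
    simp only [φ, LinearMap.pi_apply, LinearMap.comp_apply, Submodule.subtype_apply,
      lcoeff_apply, Pi.zero_apply] at hcoeff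
    rw [← hmod Q hQ P hP hQ0 hP0, Nat.div_add_mod] at hcoeff
    exact hQ0 (leadingCoeff_eq_zero.1 hcoeff)
  simpa using LinearMap.finrank_le_finrank_of_injective hφ

namespace Polynomial

variable {R : Type*} [CommRing R]

noncomputable def cubeSum (v : Fin 3 → R[X]) : R[X] := v 0 ^ 3 + v 1 ^ 3 * X + v 2 ^ 3 * X ^ 2

theorem pow_three_dvd_cubeSum {d : R[X]} {v : Fin 3 → R[X]} (h : ∀ i, d ∣ v i) :
    d ^ 3 ∣ cubeSum v := by
  have hpow := fun i => pow_dvd_pow_of_dvd (h i) 3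
  exact dvd_add (dvd_add (hpow 0) ((hpow 1).mul_right _)) ((hpow 2).mul_right _)

theorem coeff_pow_three_mul_X_pow [CharP R 3] (p : R[X]) (n : ℕ) {i j : ℕ} (hi : i < 3)
    (hj : j < 3) : (p ^ 3 * X ^ i).coeff (3 * n + j) = if i = j then p.coeff n ^ 3 else 0 := by
  have : Fact (Nat.Prime 3) := ⟨Nat.prime_three⟩
  rw [coeff_mul_X_pow', ← map_frobenius_expand 3, coeff_map, coeff_expand three_pos]
  by_cases hij : i = j
  · subst hij
    simp [frobenius_def, mul_div_cancel_left₀]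
  · rw [if_neg hij]
    split_ifs <;> first | simp | omega

theorem coeff_cubeSum [CharP R 3] (v : Fin 3 → R[X]) (n : ℕ) (i : Fin 3) :
    (cubeSum v).coeff (3 * n + i) = (v i).coeff n ^ 3 := by
  have h := fun (p : R[X]) (k : ℕ) (hk : k < 3) => coeff_pow_three_mul_X_pow p n hk i.isLt
  have h0 := h (v 0) 0 (by norm_num)
  have h1 := h (v 1) 1 (by norm_num)
  have h2 := h (v 2) 2 (by norm_num)
  rw [pow_zero, mul_one] at h0
  rw [pow_one] at h1
  rw [cubeSum, coeff_add, coeff_add, h0, h1, h2]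
  fin_cases i <;> simp

variable [IsDomain R] [CharP R 3] {v w : Fin 3 → R[X]}

theorem coeff_cubeSum_ne_zero {i : Fin 3} (hi : v i ≠ 0) :
    (cubeSum v).coeff (3 * (v i).natDegree + i) ≠ 0 := by
  rw [coeff_cubeSum]
  exact pow_ne_zero _ (leadingCoeff_ne_zero.2 hi)

theorem le_natDegree_cubeSum {i : Fin 3} (hi : v i ≠ 0) :
    3 * (v i).natDegree + i ≤ (cubeSum v).natDegree :=
  le_natDegree_of_ne_zero (coeff_cubeSum_ne_zero hi)

theorem lt_of_degree_cubeSum_lt {n : ℕ} (hv : (cubeSum v).degree < n) {i : Fin 3}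
    (hi : v i ≠ 0) : 3 * (v i).natDegree + i < n := by
  exact_mod_cast (le_degree_of_ne_zero (coeff_cubeSum_ne_zero hi)).trans_lt hv

theorem exists_natDegree_cubeSum (hv : cubeSum v ≠ 0) :
    ∃ i : Fin 3, v i ≠ 0 ∧ 3 * (v i).natDegree + i = (cubeSum v).natDegree := by
  let d := (cubeSum v).natDegree
  let i : Fin 3 := ⟨d % 3, Nat.mod_lt _ three_pos⟩
  have hi : (i : ℕ) = d % 3 := rfl
  have hcoeff : (v i).coeff (d / 3) ^ 3 ≠ 0 := by
    rw [← coeff_cubeSum, hi, Nat.div_add_mod]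
    exact leadingCoeff_ne_zero.2 hv
  have hvi : v i ≠ 0 := fun h => hcoeff (by simp [h])
  have hle := le_natDegree_of_ne_zero (pow_ne_zero_iff three_ne_zero |>.1 hcoeff)
  refine ⟨i, hvi, le_antisymm (le_natDegree_cubeSum hvi) ?_⟩
  omega

theorem natDegree_cubeSum_mod_three_eq (hvw : v ⨯₃ w = 0) (hv : cubeSum v ≠ 0)
    (hw : cubeSum w ≠ 0) : (cubeSum v).natDegree % 3 = (cubeSum w).natDegree % 3 := by
  obtain ⟨i, hvi, hi⟩ := exists_natDegree_cubeSum hv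
  obtain ⟨j, hwj, hj⟩ := exists_natDegree_cubeSum hw
  have hij := mul_eq_mul_of_cross_eq_zero hvw i j
  have hvj : v j ≠ 0 := left_ne_zero_of_mul (hij ▸ mul_ne_zero hvi hwj)
  have hwi : w i ≠ 0 := right_ne_zero_of_mul (hij ▸ mul_ne_zero hvi hwj)
  have hdeg := congrArg natDegree hij
  rw [natDegree_mul hvi hwj, natDegree_mul hvj hwi] at hdeg
  have := le_natDegree_cubeSum hvj
  have := le_natDegree_cubeSum hwi
  omega

/-- The `k`-th component of `v ⨯₃ w` pairs components of weights summing to `3 - k`. -/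
theorem natDegree_cross_apply_bound {g : ℕ} (hv : (cubeSum v).degree < g)
    (hw : (cubeSum w).degree < g) (k : Fin 3) (hk : (v ⨯₃ w) k ≠ 0) :
    3 * ((v ⨯₃ w) k).natDegree + 5 ≤ 2 * g + k := by
  have hmul : ∀ a b : Fin 3, v a * w b ≠ 0 →
      3 * (v a * w b).natDegree + a + b + 2 ≤ 2 * g := by
    intro a b hab
    have ha := lt_of_degree_cubeSum_lt hv (left_ne_zero_of_mul hab)
    have hb := lt_of_degree_cubeSum_lt hw (right_ne_zero_of_mul hab)
    rw [natDegree_mul (left_ne_zero_of_mul hab) (right_ne_zero_of_mul hab)]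
    omega
  have hsub : ∀ a b : Fin 3, (v ⨯₃ w) k = v a * w b - v b * w a → (a : ℕ) + b + k = 3 →
      3 * ((v ⨯₃ w) k).natDegree + 5 ≤ 2 * g + k := by
    intro a b hab habk
    have hle := natDegree_sub_le (v a * w b) (v b * w a)
    rw [← hab] at hle
    rcases eq_or_ne (v a * w b) 0 with h₁ | h₁ <;> rcases eq_or_ne (v b * w a) 0 with h₂ | h₂
    · exact absurd (by rw [hab, h₁, h₂, sub_zero]) hk
    · have := hmul b a h₂
      rw [h₁, natDegree_zero] at hle
      omega
    · have := hmul a b h₁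
      rw [h₂, natDegree_zero] at hle
      omega
    · have := hmul a b h₁
      have := hmul b a h₂
      omega
  fin_cases k
  · exact hsub 1 2 rfl rfl
  · exact hsub 2 0 rfl rfl
  · exact hsub 0 1 rfl rfl

theorem cross_eq_zero_of_dotProduct_eq_zero {c u : Fin 3 → R[X]} {g : ℕ} (hc : cubeSum c ≠ 0)
    (hg : 2 * g ≤ (cubeSum c).natDegree) (hu : u ⬝ᵥ (c ∘ Fin.rev) = 1)
    (hv : (cubeSum v).degree < g) (hw : (cubeSum w).degree < g)
    (hvc : v ⬝ᵥ (c ∘ Fin.rev) = 0) (hwc : w ⬝ᵥ (c ∘ Fin.rev) = 0) : v ⨯₃ w = 0 := by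
  have hsmul := cross_eq_smul_of_dotProduct_eq_zero hu hvc hwc
  set t := u ⬝ᵥ v ⨯₃ w
  obtain ⟨j, hcj, hj⟩ := exists_natDegree_cubeSum hc
  rw [hsmul]
  by_contra hne
  have ht : t ≠ 0 := fun h => hne (by rw [h, zero_smul])
  have hk : (v ⨯₃ w) j.rev = t * c j := by simp [hsmul]
  have hbound := natDegree_cross_apply_bound hv hw j.rev (hk ▸ mul_ne_zero ht hcj)
  rw [hk, natDegree_mul ht hcj, Fin.val_rev] at hbound
  omega

end Polynomial

/-- `M` is the space in Elkin's formula, so its dimension is the `a`-number of `Y² = f(X)`. -/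
theorem aNumber_le_ceil_general {F : Type*} [Field F] [CharP F 3]
    (g ε : ℕ)
    (f c0 c1 c2 : F[X]) (hsq : Squarefree f)
    (hdeg : f.natDegree = 2 * g + ε)
    (h : f = c0 ^ 3 + c1 ^ 3 * X + c2 ^ 3 * X ^ 2)
    (M : Submodule F F[X])
    (hM : (M : Set F[X]) = {Q : F[X] | Q.degree < (g : WithBot ℕ) ∧
      ∃ Q0 Q1 Q2 : F[X], Q = Q0 ^ 3 + Q1 ^ 3 * X + Q2 ^ 3 * X ^ 2 ∧
        Q2 * c0 + Q1 * c1 + Q0 * c2 = 0}) :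
    Module.finrank F M ≤ (g + 2) / 3 := by
  let c : Fin 3 → F[X] := ![c0, c1, c2]
  have hfc : f = cubeSum c := h
  have hrev : c ∘ Fin.rev = ![c2, c1, c0] := by
    ext i
    fin_cases i <;> rfl
  have hmem : ∀ Q ∈ M, Q.degree < g ∧ ∃ v, Q = cubeSum v ∧ v ⬝ᵥ (c ∘ Fin.rev) = 0 := by
    intro Q hQ
    obtain ⟨hQg, Q0, Q1, Q2, rfl, hrel⟩ := (Set.ext_iff.1 hM Q).1 hQ
    refine ⟨hQg, ![Q0, Q1, Q2], rfl, ?_⟩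
    rw [hrev, vec3_dotProduct']
    linear_combination hrel
  obtain ⟨u, hu⟩ := exists_dotProduct_eq_one_of_isUnit (c ∘ Fin.rev) fun d hd =>
    hsq d <| (Dvd.intro d (by ring)).trans <| hfc ▸ pow_three_dvd_cubeSum fun i => by
      simpa using hd i.rev
  have hf0 : cubeSum c ≠ 0 := hfc ▸ hsq.ne_zero
  have hfdeg : 2 * g ≤ (cubeSum c).natDegree := by
    rw [← hfc, hdeg]
    omega
  refine (finrank_le_of_natDegree_mod_eq three_pos (fun Q hQ => (hmem Q hQ).1) ?_).trans_eq rfl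
  intro P hP Q hQ hP0 hQ0
  obtain ⟨hPg, v, rfl, hv⟩ := hmem P hP
  obtain ⟨hQg, w, rfl, hw⟩ := hmem Q hQ
  exact natDegree_cubeSum_mod_three_eq
    (cross_eq_zero_of_dotProduct_eq_zero hf0 hfdeg hu hPg hQg hv hw) hP0 hQ0

/-- In characteristic 3, every hyperelliptic curve `Y² = f(X)` of genus `g` (with `f` monic
squarefree of degree `2g + ε`) has `a`-number at most `⌈g/3⌉`.  By Elkin's formula, writing
`f = c₀³ + c₁³X + c₂³X²`, the `a`-number is the `𝔽_q`-dimension of the space of polynomials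
`Q = Q₀³ + Q₁³X + Q₂³X²` of degree `< g` with `Q₂c₀ + Q₁c₁ + Q₀c₂ = 0`. -/
theorem aNumber_le_ceil {F : Type*} [Field F] [Fintype F] [CharP F 3]
    (g ε : ℕ) (hε : ε = 1 ∨ ε = 2)
    (f c0 c1 c2 : F[X]) (hf : f.Monic) (hsq : Squarefree f)
    (hdeg : f.natDegree = 2 * g + ε)
    (h : f = c0 ^ 3 + c1 ^ 3 * X + c2 ^ 3 * X ^ 2)
    (M : Submodule F F[X])
    (hM : (M : Set F[X]) = {Q : F[X] | Q.degree < (g : WithBot ℕ) ∧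
      ∃ Q0 Q1 Q2 : F[X], Q = Q0 ^ 3 + Q1 ^ 3 * X + Q2 ^ 3 * X ^ 2 ∧
        Q2 * c0 + Q1 * c1 + Q0 * c2 = 0}) :
    Module.finrank F M ≤ (g + 2) / 3 :=
  aNumber_le_ceil_general g ε f c0 c1 c2 hsq hdeg h M hM
end
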